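/- arXiv:1910.03080 — 2 statements merged into one kernel-verified Lean document; each statement's English description precedes it below -/
import Mathlib

section
/- If \phi : R^d \to R is smooth and for all distinct v, v_* one has \nabla\phi(v) - \nabla\phi(v_*) parallel to v - v_*, then \phi is a quadratic polynomial of the form \phi(v) = \lambda^{(0)} + \lambda^{(1)}\cdot v + (\lambda^{(2)}/2)|v|^2 for some constants \lambda^{(0)}, \lambda^{(2)} \in R and \lambda^{(1)} \in R^d. -/
open scoped RealInnerProductSpace

/-- If `φ` is smooth on `ℝ^d` and `∇φ(v) − ∇φ(v_*)` is parallel to `v − v_*`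
for all `v, v_*`, then `φ` is a quadratic polynomial
`φ(v) = λ⁰ + λ¹ ⋅ v + (λ²/2) |v|²`. -/
theorem gradient_diff_parallel_implies_quadratic (d : ℕ) (hd : 2 ≤ d)
    (φ : EuclideanSpace ℝ (Fin d) → ℝ) (hφ : ContDiff ℝ (⊤ : ℕ∞) φ)
    (hpar : ∀ v vs : EuclideanSpace ℝ (Fin d),
      ∃ lam : ℝ, gradient φ v - gradient φ vs = lam • (v - vs)) :
    ∃ (lam0 lam2 : ℝ) (lam1 : EuclideanSpace ℝ (Fin d)),
      ∀ v : EuclideanSpace ℝ (Fin d),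
        φ v = lam0 + ⟪lam1, v⟫ + lam2 / 2 * ‖v‖ ^ 2 := by
  set b : EuclideanSpace ℝ (Fin d) := gradient φ 0 with hb
  set i0 : Fin d := ⟨0, by omega⟩ with hi0
  set i1 : Fin d := ⟨1, by omega⟩ with hi1
  have hi01 : i0 ≠ i1 := by simp [hi0, hi1, Fin.ext_iff]
  have hi10 : i1 ≠ i0 := hi01.symm
  set u0 : EuclideanSpace ℝ (Fin d) := EuclideanSpace.single i0 (1 : ℝ) with hu0
  set u1 : EuclideanSpace ℝ (Fin d) := EuclideanSpace.single i1 (1 : ℝ) with hu1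
  have hu0ne : u0 ≠ 0 := by
    intro h
    have := congrArg (· i0) h
    simp [hu0, EuclideanSpace.single_apply, PiLp.zero_apply] at this
  have hu1ne : u1 ≠ 0 := by
    intro h
    have := congrArg (· i1) h
    simp [hu1, EuclideanSpace.single_apply, PiLp.zero_apply] at this
  -- key lemma: noncollinear vectors have the same scalar
  have key : ∀ v w : EuclideanSpace ℝ (Fin d), w ≠ 0 → (∀ t : ℝ, v ≠ t • w) → ∀ μ ν : ℝ,
      gradient φ v - b = μ • v → gradient φ w - b = ν • w → μ = ν := by
    intro v w hw hvw μ ν hμ hν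
    obtain ⟨lam, hl⟩ := hpar v w
    have h4 : μ • v - ν • w = lam • v - lam • w := by
      rw [← hμ, ← hν, ← smul_sub, ← hl]; abel
    have h3 : (μ - lam) • v = (ν - lam) • w := by
      rw [sub_smul, sub_smul]
      have h5 := sub_eq_zero.mpr h4
      rw [← sub_eq_zero, ← h5]; abel
    by_cases hml : μ = lam
    · have h5 : (ν - lam) • w = 0 := by rw [← h3, hml, sub_self, zero_smul]
      rcases smul_eq_zero.mp h5 with h | h
      · have h6 : ν - lam = 0 := h
        have hn : ν = lam := by linarith
        rw [hml, hn]
      · exact absurd h hw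
    · exfalso
      have hvcol : v = ((μ - lam)⁻¹ * (ν - lam)) • w := by
        rw [mul_smul, ← h3, ← mul_smul, inv_mul_cancel₀ (sub_ne_zero.mpr hml), one_smul]
      exact hvw _ hvcol
  -- compute scalars for u0 and u1
  obtain ⟨c, hc⟩ := hpar u0 0
  rw [sub_zero] at hc
  obtain ⟨c1, hc1⟩ := hpar u1 0
  rw [sub_zero] at hc1
  have hcol10 : ∀ s : ℝ, u1 ≠ s • u0 := by
    intro s h
    have := congrArg (· i1) h
    simp [hu0, hu1, EuclideanSpace.single_apply, PiLp.smul_apply, hi01, hi10] at this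
  have hc1c : c1 = c := key u1 u0 hu0ne hcol10 c1 c hc1 hc
  -- gradient is affine
  have hF : ∀ v : EuclideanSpace ℝ (Fin d), gradient φ v = b + c • v := by
    intro v
    rcases eq_or_ne v 0 with rfl | hv
    · simp [hb]
    · obtain ⟨μ, hμ⟩ := hpar v 0
      rw [sub_zero] at hμ
      have hμc : μ = c := by
        by_cases hcol : ∀ t : ℝ, v ≠ t • u0
        · exact key v u0 hu0ne hcol μ c hμ hc
        · push_neg at hcol
          obtain ⟨t, ht⟩ := hcol
          have htne : t ≠ 0 := by
            rintro rfl; rw [zero_smul] at ht; exact hv ht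
          have hcolv1 : ∀ s : ℝ, v ≠ s • u1 := by
            intro s h
            have h2 := congrArg (· i0) (ht ▸ h)
            simp [hu0, hu1, EuclideanSpace.single_apply, PiLp.smul_apply, hi01, hi10] at h2
            exact htne h2
          have hμ1 : μ = c1 := key v u1 hu1ne hcolv1 μ c1 hμ hc1
          rw [hμ1, hc1c]
      rw [← hμc, ← hμ]; abel
  -- the quadratic candidate
  set q : EuclideanSpace ℝ (Fin d) → ℝ := fun v => ⟪b, v⟫ + c / 2 * ⟪v, v⟫ with hq
  have hqderiv : ∀ v : EuclideanSpace ℝ (Fin d), HasGradientAt q (b + c • v) v := by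
    intro v
    rw [hasGradientAt_iff_hasFDerivAt]
    have h1 : HasFDerivAt (fun w : EuclideanSpace ℝ (Fin d) => ⟪b, w⟫)
        ((fderivInnerCLM ℝ (b, v)).comp
          ((0 : EuclideanSpace ℝ (Fin d) →L[ℝ] EuclideanSpace ℝ (Fin d)).prod
            (ContinuousLinearMap.id ℝ (EuclideanSpace ℝ (Fin d))))) v :=
      (hasFDerivAt_const b v).inner ℝ (hasFDerivAt_id v)
    have h2 : HasFDerivAt (fun w : EuclideanSpace ℝ (Fin d) => ⟪w, w⟫)
        ((fderivInnerCLM ℝ (v, v)).comp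
          ((ContinuousLinearMap.id ℝ (EuclideanSpace ℝ (Fin d))).prod
            (ContinuousLinearMap.id ℝ (EuclideanSpace ℝ (Fin d))))) v :=
      (hasFDerivAt_id v).inner ℝ (hasFDerivAt_id v)
    have h3 := h1.add (h2.const_mul (c / 2))
    refine h3.congr_fderiv ?_
    ext w
    simp [InnerProductSpace.toDual_apply_apply, fderivInnerCLM_apply, inner_add_left,
      inner_smul_left, real_inner_comm v w]
    ring
  -- φ - q has zero derivative
  have hφdiff : Differentiable ℝ φ := hφ.differentiable (by simp)
  have hψ : ∀ v : EuclideanSpace ℝ (Fin d),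
      HasFDerivAt (fun w => φ w - q w) (0 : EuclideanSpace ℝ (Fin d) →L[ℝ] ℝ) v := by
    intro v
    have hφg : HasGradientAt φ (b + c • v) v := by
      have := (hφdiff v).hasGradientAt
      rwa [hF v] at this
    have := hφg.hasFDerivAt.sub (hqderiv v).hasFDerivAt
    exact this.congr_fderiv (by simp)
  have hconst : ∀ v : EuclideanSpace ℝ (Fin d), φ v - q v = φ 0 - q 0 := by
    intro v
    exact is_const_of_fderiv_eq_zero
      (fun x => ((hψ x).differentiableAt))
      (fun x => (hψ x).fderiv) v 0
  have hq0 : q 0 = 0 := by simp [hq]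
  refine ⟨φ 0, c, b, fun v => ?_⟩
  have hv := hconst v
  rw [hq0, sub_zero] at hv
  have hφv : φ v = φ 0 + q v := by linarith
  rw [hφv]
  simp only [hq, real_inner_self_eq_norm_sq]
  ring
end

section
/- Let \psi_\eps(v) = (2\pi\eps)^{-d/2}\exp(-|v|^2/(2\eps)) be the Gaussian mollifier. If f is a nonnegative integrable function on R^d with positive total mass \rho > 0 and finite second moment \int |v|^2 f\,dv =: m_2 < \infty, then there is a constant C > 0 depending only on \eps, \rho, m_2, d such that |\log((f * \psi_\eps)(v))| \leq C(1 + |v|^2) for all v \in R^d. -/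
open MeasureTheory Real

/-!
The kernel `ψ = A exp(-‖·‖²/(2ε))` is at most `A`, so `f ∗ ψ ≤ A ρ`. Conversely
`‖v - y‖² ≤ 2‖v‖² + 2‖y‖²` gives `ψ (v - y) ≥ A exp(-‖v‖²/ε) exp(-‖y‖²/ε)`, hence
`(f ∗ ψ) v ≥ A c exp(-‖v‖²/ε)` with `c = ∫ f exp(-‖y‖²/ε)`, which is positive because `f` has
positive mass. So `log (f ∗ ψ) v` lies between `log (A c) - ‖v‖²/ε` and `log (A ρ)`.
-/

lemma abs_log_le_of_exp_lower_bound {a b k s x : ℝ} (ha : 0 < a) (hk : 0 < k) (hs : 0 ≤ s)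
    (hlow : a * exp (-s / k) ≤ x) (hup : x ≤ b) :
    |log x| ≤ (|log a| + |log b| + k⁻¹) * (1 + s) := by
  have hx : 0 < x := (by positivity : 0 < a * exp (-s / k)).trans_le hlow
  have hlog_up : log x ≤ |log b| := (log_le_log hx hup).trans (le_abs_self _)
  have hlog_low : -|log a| - k⁻¹ * s ≤ log x := by
    have h := log_le_log (by positivity) hlow
    rw [log_mul ha.ne' (exp_pos _).ne', log_exp, neg_div, div_eq_inv_mul] at h
    linarith [neg_abs_le (log a)]
  have hab : 0 ≤ (|log a| + |log b|) * s := by positivity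
  rw [abs_le]
  constructor <;> nlinarith [abs_nonneg (log a), abs_nonneg (log b), inv_pos.2 hk]

lemma exp_neg_div_le_one {x c : ℝ} (hx : 0 ≤ x) (hc : 0 ≤ c) : exp (-x / c) ≤ 1 :=
  exp_le_one_iff.2 (div_nonpos_of_nonpos_of_nonneg (neg_nonpos.2 hx) hc)

lemma exp_neg_sq_norm_mul_le {E : Type*} [SeminormedAddCommGroup E] {ε : ℝ} (hε : 0 < ε)
    (v y : E) :
    exp (-‖v‖ ^ 2 / ε) * exp (-‖y‖ ^ 2 / ε) ≤ exp (-‖v - y‖ ^ 2 / (2 * ε)) := by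
  have hsq : ‖v - y‖ ^ 2 ≤ 2 * ‖v‖ ^ 2 + 2 * ‖y‖ ^ 2 := by
    nlinarith [norm_sub_le v y, norm_nonneg (v - y), sq_nonneg (‖v‖ - ‖y‖)]
  rw [← exp_add, exp_le_exp, ← add_div, div_le_div_iff₀ hε (by positivity)]
  nlinarith

section Integral

variable {α : Type*} [MeasurableSpace α] {μ : Measure α} {f g : α → ℝ}

lemma integral_mul_pos_of_pos (hf0 : 0 ≤ f) (hf : 0 < ∫ x, f x ∂μ) (hg : ∀ x, 0 < g x)
    (hfg : Integrable (fun x => f x * g x) μ) : 0 < ∫ x, f x * g x ∂μ := by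
  have hfi : Integrable f μ := .of_integral_ne_zero hf.ne'
  rw [integral_pos_iff_support_of_nonneg hf0 hfi] at hf
  rwa [integral_pos_iff_support_of_nonneg (fun x => mul_nonneg (hf0 x) (hg x).le) hfg,
    Function.support_mul_of_ne_zero_right f fun x => (hg x).ne']

lemma integral_mul_le_integral_of_le_one (hf0 : 0 ≤ f) (hf : Integrable f μ)
    (hg0 : ∀ x, 0 ≤ g x) (hg1 : ∀ x, g x ≤ 1) : ∫ x, f x * g x ∂μ ≤ ∫ x, f x ∂μ :=
  integral_mono_of_nonneg (.of_forall fun x => mul_nonneg (hf0 x) (hg0 x)) hf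
    (.of_forall fun x => mul_le_of_le_one_right (hf0 x) (hg1 x))

variable [TopologicalSpace α] [OpensMeasurableSpace α]

lemma MeasureTheory.Integrable.mul_exp_neg_div (hf : Integrable f μ) {q : α → ℝ}
    (hq : Continuous q) (hq0 : ∀ x, 0 ≤ q x) {c : ℝ} (hc : 0 ≤ c) :
    Integrable (fun x => f x * exp (-q x / c)) μ :=
  hf.mul_bdd (c := 1) (by fun_prop) (.of_forall fun x => by
    rw [norm_of_nonneg (exp_pos _).le]; exact exp_neg_div_le_one (hq0 x) hc)

end Integral

section GaussianConvolution

variable {E : Type*} [NormedAddCommGroup E] [MeasurableSpace E] {μ : Measure E} {f : E → ℝ}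
  {ε : ℝ}

lemma integral_mul_exp_neg_sq_norm_sub_le (hf0 : 0 ≤ f) (hf : Integrable f μ) (hε : 0 ≤ ε)
    (v : E) : ∫ y, f y * exp (-‖v - y‖ ^ 2 / (2 * ε)) ∂μ ≤ ∫ y, f y ∂μ :=
  integral_mul_le_integral_of_le_one hf0 hf (fun _ => (exp_pos _).le)
    fun _ => exp_neg_div_le_one (by positivity) (by positivity)

variable [OpensMeasurableSpace E]

lemma exp_neg_sq_norm_mul_integral_le (hf0 : 0 ≤ f) (hf : Integrable f μ) (hε : 0 < ε)
    (v : E) :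
    exp (-‖v‖ ^ 2 / ε) * ∫ y, f y * exp (-‖y‖ ^ 2 / ε) ∂μ
      ≤ ∫ y, f y * exp (-‖v - y‖ ^ 2 / (2 * ε)) ∂μ := by
  rw [← integral_const_mul]
  refine integral_mono_of_nonneg
    (.of_forall fun y => mul_nonneg (exp_pos _).le (mul_nonneg (hf0 y) (exp_pos _).le))
    (hf.mul_exp_neg_div (by fun_prop) (fun _ => by positivity) (by positivity))
    (.of_forall fun y => ?_)
  calc exp (-‖v‖ ^ 2 / ε) * (f y * exp (-‖y‖ ^ 2 / ε))
      = f y * (exp (-‖v‖ ^ 2 / ε) * exp (-‖y‖ ^ 2 / ε)) := by ring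
    _ ≤ f y * exp (-‖v - y‖ ^ 2 / (2 * ε)) :=
      mul_le_mul_of_nonneg_left (exp_neg_sq_norm_mul_le hε v y) (hf0 y)

lemma integral_mul_exp_neg_sq_norm_pos (hf0 : 0 ≤ f) (hf : 0 < ∫ y, f y ∂μ) (hε : 0 ≤ ε) :
    0 < ∫ y, f y * exp (-‖y‖ ^ 2 / ε) ∂μ :=
  integral_mul_pos_of_pos hf0 hf (fun _ => exp_pos _)
    ((Integrable.of_integral_ne_zero hf.ne').mul_exp_neg_div (by fun_prop)
      (fun _ => by positivity) hε)

end GaussianConvolution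

theorem log_conv_gaussian_quadratic_bound_general (d : ℕ) (ε : ℝ) (hε : 0 < ε)
    (ψ : EuclideanSpace ℝ (Fin d) → ℝ)
    (hψ : ψ = fun v => (2 * π * ε) ^ (-(d : ℝ) / 2) * Real.exp (-‖v‖ ^ 2 / (2 * ε)))
    (f : EuclideanSpace ℝ (Fin d) → ℝ) (hf : Integrable f)
    (hfpos : ∀ v, 0 ≤ f v) (ρ : ℝ) (hρ : 0 < ρ) (hmass : ∫ v, f v = ρ) :
    ∃ C : ℝ, 0 < C ∧ ∀ v : EuclideanSpace ℝ (Fin d),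
      |Real.log (∫ y, f y * ψ (v - y))| ≤ C * (1 + ‖v‖ ^ 2) := by
  subst hψ
  set A := (2 * π * ε) ^ (-(d : ℝ) / 2)
  have hA : 0 < A := by positivity
  set c := ∫ y, f y * exp (-‖y‖ ^ 2 / ε)
  have hc : 0 < c := integral_mul_exp_neg_sq_norm_pos hfpos (hmass ▸ hρ) hε.le
  refine ⟨|log (A * c)| + |log (A * ρ)| + ε⁻¹ + 1, by positivity, fun v => ?_⟩
  have hconv : ∫ y, f y * (A * exp (-‖v - y‖ ^ 2 / (2 * ε)))
      = A * ∫ y, f y * exp (-‖v - y‖ ^ 2 / (2 * ε)) := by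
    rw [← integral_const_mul]; simp_rw [mul_left_comm]
  have hup := integral_mul_exp_neg_sq_norm_sub_le hfpos hf hε.le v
  have hlow := exp_neg_sq_norm_mul_integral_le hfpos hf hε v
  rw [hconv]
  calc _ ≤ (|log (A * c)| + |log (A * ρ)| + ε⁻¹) * (1 + ‖v‖ ^ 2) := by
        refine abs_log_le_of_exp_lower_bound (mul_pos hA hc) hε (by positivity) ?_ ?_
        · rw [mul_right_comm, mul_assoc]; gcongr
        · rw [← hmass]; gcongr
    _ ≤ _ := mul_le_mul_of_nonneg_right (by linarith) (by positivity)

/-- Quadratic bound on `|log (f ∗ ψ_ε)|`: if `f ≥ 0` is integrable with positive mass and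
finite second moment, then `|log((f ∗ ψ_ε)(v))| ≤ C (1 + |v|²)` for a constant `C` depending
only on `ε`, the mass, the second moment and `d`. -/
theorem log_conv_gaussian_quadratic_bound (d : ℕ) (hd : 1 ≤ d) (ε : ℝ) (hε : 0 < ε)
    (ψ : EuclideanSpace ℝ (Fin d) → ℝ)
    (hψ : ψ = fun v => (2 * π * ε) ^ (-(d : ℝ) / 2) * Real.exp (-‖v‖ ^ 2 / (2 * ε)))
    (f : EuclideanSpace ℝ (Fin d) → ℝ) (hf : Integrable f)
    (hfpos : ∀ v, 0 ≤ f v) (ρ : ℝ) (hρ : 0 < ρ) (hmass : ∫ v, f v = ρ)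
    (hm2 : Integrable (fun v => ‖v‖ ^ 2 * f v)) :
    ∃ C : ℝ, 0 < C ∧ ∀ v : EuclideanSpace ℝ (Fin d),
      |Real.log (∫ y, f y * ψ (v - y))| ≤ C * (1 + ‖v‖ ^ 2) :=
  log_conv_gaussian_quadratic_bound_general d ε hε ψ hψ f hf hfpos ρ hρ hmass
end
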